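/- arXiv:0907.2609 — 2 statements merged into one kernel-verified Lean document; each statement's English description precedes it below -/
import Mathlib

section
/- Let d ≥ 2 and let g : ℕ → ℝ_{>0} be nondecreasing, and let (n_k)_{k≥0} be a strictly increasing sequence of positive integers with n_{k+1} ≤ n_k + g(n_k) for all k. If Σ_{n ≥ n_0} g(n)^{-d/(d-1)} = ∞, then Σ_{k≥0} g(n_k)^{-1/(d-1)} = ∞. -/
/-!
Cut `[n₀, ∞)` into the blocks `[n_k, n_{k+1})`. Since `g` is nondecreasing, every term of
`Σ g(m)^{-d/(d-1)}` over the `k`-th block is at most `g(n_k)^{-d/(d-1)}`, and the block has at most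
`g(n_k)` terms, so the block sum is at most `g(n_k)^{1 - d/(d-1)} = g(n_k)^{-1/(d-1)}`.
Summability of the sparse series would thus bound the partial sums of the full one.
-/

open Finset

theorem sum_Ico_le_sum_range_of_sum_Ico_le {f b : ℕ → ℝ} {n : ℕ → ℕ} (hn : Monotone n)
    (hblock : ∀ k, ∑ m ∈ Ico (n k) (n (k + 1)), f m ≤ b k) (K : ℕ) :
    ∑ m ∈ Ico (n 0) (n K), f m ≤ ∑ k ∈ range K, b k := by
  induction K with
  | zero => simp
  | succ K ih =>
    rw [sum_range_succ, ← sum_Ico_consecutive _ (hn K.zero_le) (hn K.le_succ)]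
    exact add_le_add ih (hblock K)

theorem summable_comp_add_of_sum_Ico_le {f b : ℕ → ℝ} {n : ℕ → ℕ} (hf : ∀ m, 0 ≤ f m)
    (hn : StrictMono n) (hb : Summable b) (hblock : ∀ k, ∑ m ∈ Ico (n k) (n (k + 1)), f m ≤ b k) :
    Summable (fun j => f (n 0 + j)) := by
  have hb_nonneg : ∀ k, 0 ≤ b k := fun k =>
    (sum_nonneg fun m _ => hf m).trans (hblock k)
  refine summable_of_sum_range_le (c := ∑' k, b k) (fun j => hf _) fun N => ?_
  have hN : n 0 + N ≤ n N := by simpa [add_comm] using hn.add_le_nat N 0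
  calc ∑ j ∈ range N, f (n 0 + j)
      = ∑ m ∈ Ico (n 0) (n 0 + N), f m := by rw [sum_Ico_eq_sum_range, Nat.add_sub_cancel_left]
    _ ≤ ∑ m ∈ Ico (n 0) (n N), f m :=
        sum_le_sum_of_subset_of_nonneg (Ico_subset_Ico_right hN) fun m _ _ => hf m
    _ ≤ ∑ k ∈ range N, b k := sum_Ico_le_sum_range_of_sum_Ico_le hn.monotone hblock N
    _ ≤ ∑' k, b k := hb.sum_le_tsum _ fun k _ => hb_nonneg k

theorem sum_Ico_rpow_le_rpow_one_add {g : ℕ → ℝ} (hgpos : ∀ m, 0 < g m) (hgmono : Monotone g)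
    {p : ℝ} (hp : p ≤ 0) {a b : ℕ} (hab : a ≤ b) (hb : (b : ℝ) ≤ a + g a) :
    ∑ m ∈ Ico a b, g m ^ p ≤ g a ^ (1 + p) :=
  calc ∑ m ∈ Ico a b, g m ^ p
      ≤ #(Ico a b) • g a ^ p := sum_le_card_nsmul _ _ _ fun m hm =>
        Real.rpow_le_rpow_of_nonpos (hgpos a) (hgmono (mem_Ico.mp hm).1) hp
    _ = ((b - a : ℕ) : ℝ) * g a ^ p := by rw [Nat.card_Ico, nsmul_eq_mul]
    _ ≤ g a * g a ^ p := by
        gcongr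
        · exact Real.rpow_nonneg (hgpos a).le p
        · rw [Nat.cast_sub hab]; linarith
    _ = g a ^ (1 + p) := by rw [Real.rpow_add (hgpos a), Real.rpow_one]

theorem series_comparison_general (d : ℕ) (hd : 2 ≤ d) (g : ℕ → ℝ) (hgpos : ∀ n, 0 < g n)
    (hgmono : Monotone g) (n : ℕ → ℕ) (hmono : StrictMono n)
    (hrec : ∀ k, ((n (k + 1) : ℝ)) ≤ (n k : ℝ) + g (n k))
    (hdiv : ¬ Summable (fun j : ℕ => g (n 0 + j) ^ (-(d : ℝ) / ((d : ℝ) - 1)))) :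
    ¬ Summable (fun k : ℕ => g (n k) ^ (-(1 : ℝ) / ((d : ℝ) - 1))) := by
  intro hsum
  have hd1 : (1 : ℝ) < d := by exact_mod_cast hd
  have hp : -(d : ℝ) / ((d : ℝ) - 1) ≤ 0 :=
    div_nonpos_of_nonpos_of_nonneg (neg_nonpos.mpr d.cast_nonneg) (by linarith)
  have hpq : 1 + -(d : ℝ) / ((d : ℝ) - 1) = -(1 : ℝ) / ((d : ℝ) - 1) := by
    field_simp [(by linarith : (d : ℝ) - 1 ≠ 0)]; ring
  refine hdiv (summable_comp_add_of_sum_Ico_le (fun m => Real.rpow_nonneg (hgpos m).le _)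
    hmono hsum fun k => ?_)
  rw [← hpq]
  exact sum_Ico_rpow_le_rpow_one_add hgpos hgmono hp (hmono k.lt_succ_self).le (hrec k)

/-- the series comparison used in the isoperimetric criterion: if
`Σ_{n ≥ n_0} g(n)^{-d/(d-1)} = ∞` and `n_{k+1} ≤ n_k + g(n_k)`, then
`Σ_k g(n_k)^{-1/(d-1)} = ∞`. -/
theorem series_comparison (d : ℕ) (hd : 2 ≤ d) (g : ℕ → ℝ) (hgpos : ∀ n, 0 < g n)
    (hgmono : Monotone g) (n : ℕ → ℕ) (hmono : StrictMono n) (hpos : ∀ k, 0 < n k)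
    (hrec : ∀ k, ((n (k + 1) : ℝ)) ≤ (n k : ℝ) + g (n k))
    (hdiv : ¬ Summable (fun j : ℕ => g (n 0 + j) ^ (-(d : ℝ) / ((d : ℝ) - 1)))) :
    ¬ Summable (fun k : ℕ => g (n k) ^ (-(1 : ℝ) / ((d : ℝ) - 1))) :=
  series_comparison_general d hd g hgpos hgmono n hmono hrec hdiv
end

section
/- Let P_n be a sequence of sphere packings in ℝ^d, each containing the closed unit ball B(0,1), and suppose that every ball of P_n tangent to B(0,1) has radius in [1/M, M]. Suppose the closures of the unions ∪P_n converge in the local Hausdorff topology to a closed set P. Then P contains the unit sphere, and any sphere in P arising as a limit of spheres tangent to the unit ball has radius in [1/M, M] and is tangent to the unit sphere. -/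
/-!
Two balls of positive radius in a Euclidean space are tangent exactly when the distance of their
centres is the sum of their radii, so tangency to the unit ball is the closed condition
`dist c 0 = r + 1` and, together with the radius bounds, passes to limits. Every point `x` of a
limit sphere `sphere c r` is the limit of the points `cₙ + (rₙ / r) • (x - c)` of the
approximating spheres, hence lies in `P`.
-/

open Metric Filter

/-- Two closed balls are tangent: they intersect in exactly one point. -/
def TangentBalls {d : ℕ} (c₁ : EuclideanSpace ℝ (Fin d)) (r₁ : ℝ)
    (c₂ : EuclideanSpace ℝ (Fin d)) (r₂ : ℝ) : Prop :=
  ∃ p, closedBall c₁ r₁ ∩ closedBall c₂ r₂ = {p}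

open Set Topology

section NormedSpace

variable {E : Type*} [NormedAddCommGroup E] [NormedSpace ℝ E] {c₁ c₂ : E} {r₁ r₂ : ℝ}

theorem closedBall_inter_closedBall_eq_singleton_of_dist_eq_add [StrictConvexSpace ℝ E]
    (h₁ : 0 < r₁) (h₂ : 0 < r₂) (h : dist c₁ c₂ = r₁ + r₂) :
    closedBall c₁ r₁ ∩ closedBall c₂ r₂ = {AffineMap.lineMap c₁ c₂ (r₁ / (r₁ + r₂))} := by
  have hsum : r₁ + r₂ ≠ 0 := (add_pos h₁ h₂).ne'
  have hfrac : 1 - r₁ / (r₁ + r₂) = r₂ / (r₁ + r₂) := by field_simp; ring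
  ext p
  simp only [mem_inter_iff, mem_closedBall, mem_singleton_iff]
  constructor
  · rintro ⟨hp₁, hp₂⟩
    rw [dist_comm] at hp₁
    have htri := dist_triangle c₁ p c₂
    refine eq_lineMap_of_dist_eq_mul_of_dist_eq_mul ?_ ?_
    · rw [h, div_mul_cancel₀ _ hsum]; linarith
    · rw [h, hfrac, div_mul_cancel₀ _ hsum]; linarith
  · rintro rfl
    rw [dist_lineMap_left, dist_lineMap_right, hfrac, h, Real.norm_of_nonneg (by positivity),
      Real.norm_of_nonneg (by positivity), div_mul_cancel₀ _ hsum, div_mul_cancel₀ _ hsum]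
    exact ⟨le_rfl, le_rfl⟩

theorem dist_eq_add_of_closedBall_inter_closedBall_eq_singleton [Nontrivial E] {p : E}
    (h₁ : 0 < r₁) (h₂ : 0 < r₂) (h : closedBall c₁ r₁ ∩ closedBall c₂ r₂ = {p}) :
    dist c₁ c₂ = r₁ + r₂ := by
  have hp : p ∈ closedBall c₁ r₁ ∩ closedBall c₂ r₂ := h ▸ rfl
  have hle : dist c₁ c₂ ≤ r₁ + r₂ :=
    (dist_triangle c₁ p c₂).trans (add_le_add (mem_closedBall'.1 hp.1) hp.2)
  refine hle.eq_of_not_lt fun hlt => ?_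
  obtain ⟨y, hy₁, hy₂⟩ := exists_dist_lt_lt h₁ h₂ (by rwa [add_comm] at hlt)
  have hlens_ne : (ball c₁ r₁ ∩ ball c₂ r₂).Nonempty := ⟨y, mem_ball'.2 hy₁, hy₂⟩
  have hlens : ball c₁ r₁ ∩ ball c₂ r₂ = {p} :=
    hlens_ne.subset_singleton_iff.1 <|
      h ▸ inter_subset_inter ball_subset_closedBall ball_subset_closedBall
  exact not_isOpen_singleton p (hlens ▸ isOpen_ball.inter isOpen_ball)

theorem exists_tendsto_of_mem_sphere {α : Type*} {l : Filter α} {cs : α → E} {rs : α → ℝ}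
    {c x : E} {r : ℝ} (hc : Tendsto cs l (𝓝 c)) (hr : Tendsto rs l (𝓝 r)) (hrs : ∀ a, 0 ≤ rs a)
    (hr₀ : 0 < r) (hx : x ∈ sphere c r) :
    ∃ xs : α → E, (∀ a, xs a ∈ sphere (cs a) (rs a)) ∧ Tendsto xs l (𝓝 x) := by
  refine ⟨fun a => cs a + (rs a / r) • (x - c), fun a => ?_, ?_⟩
  · rw [mem_sphere_iff_norm, add_sub_cancel_left, norm_smul, mem_sphere_iff_norm.1 hx,
      Real.norm_of_nonneg (div_nonneg (hrs a) hr₀.le), div_mul_cancel₀ _ hr₀.ne']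
  · simpa [hr₀.ne'] using hc.add ((hr.div_const r).smul_const (x - c))

end NormedSpace

theorem tangentBalls_iff_dist_eq_add {d : ℕ} [NeZero d] {c₁ c₂ : EuclideanSpace ℝ (Fin d)}
    {r₁ r₂ : ℝ} (h₁ : 0 < r₁) (h₂ : 0 < r₂) :
    TangentBalls c₁ r₁ c₂ r₂ ↔ dist c₁ c₂ = r₁ + r₂ :=
  ⟨fun ⟨_, hp⟩ => dist_eq_add_of_closedBall_inter_closedBall_eq_singleton h₁ h₂ hp,
    fun h => ⟨_, closedBall_inter_closedBall_eq_singleton_of_dist_eq_add h₁ h₂ h⟩⟩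

theorem packing_limit_general (d : ℕ) (hd : 2 ≤ d) (M : ℝ)
    (ι : ℕ → Type) (C : ∀ n, ι n → EuclideanSpace ℝ (Fin d)) (ρ : ∀ n, ι n → ℝ)
    (hρ : ∀ n i, 0 < ρ n i)
    (hunit : ∀ n, ∃ i : ι n, C n i = 0 ∧ ρ n i = 1)
    (hrad : ∀ n (i : ι n), TangentBalls (C n i) (ρ n i) (0 : EuclideanSpace ℝ (Fin d)) 1 →
      ρ n i ∈ Set.Icc (1 / M) M)
    (S : ℕ → Set (EuclideanSpace ℝ (Fin d)))
    (hS : ∀ n, S n = ⋃ i : ι n, sphere (C n i) (ρ n i))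
    (P : Set (EuclideanSpace ℝ (Fin d)))
    -- local Hausdorff convergence of the packings (expressed in Kuratowski form):
    (hupper : ∀ (x : EuclideanSpace ℝ (Fin d)) (xs : ℕ → EuclideanSpace ℝ (Fin d)),
      (∀ n, xs n ∈ S n) → Tendsto xs atTop (nhds x) → x ∈ P) :
    sphere (0 : EuclideanSpace ℝ (Fin d)) 1 ⊆ P ∧
      ∀ (c : EuclideanSpace ℝ (Fin d)) (r : ℝ)
        (cs : ℕ → EuclideanSpace ℝ (Fin d)) (rs : ℕ → ℝ),
        (∀ n, ∃ i : ι n, C n i = cs n ∧ ρ n i = rs n ∧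
          TangentBalls (C n i) (ρ n i) (0 : EuclideanSpace ℝ (Fin d)) 1) →
        Tendsto cs atTop (nhds c) → Tendsto rs atTop (nhds r) →
        r ∈ Set.Icc (1 / M) M ∧
          TangentBalls c r (0 : EuclideanSpace ℝ (Fin d)) 1 ∧
          sphere c r ⊆ P := by
  have : NeZero d := ⟨by omega⟩
  refine ⟨fun x hx => hupper x (fun _ => x) (fun n => ?_) tendsto_const_nhds, ?_⟩
  · obtain ⟨i, hi₀, hi₁⟩ := hunit n
    exact hS n ▸ mem_iUnion.2 ⟨i, by rwa [hi₀, hi₁]⟩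
  intro c r cs rs hseq hc hr
  choose i hCi hρi htan using hseq
  have hrs : ∀ n, rs n ∈ Icc (1 / M) M := fun n => hρi n ▸ hrad n (i n) (htan n)
  have hrM : r ∈ Icc (1 / M) M := isClosed_Icc.mem_of_tendsto hr (Eventually.of_forall hrs)
  have hrs₀ : ∀ n, 0 < rs n := fun n => hρi n ▸ hρ n (i n)
  have hr₀ : 0 < r := (one_div_pos.2 ((hrs₀ 0).trans_le (hrs 0).2)).trans_le hrM.1
  have hdist : ∀ n, dist (cs n) 0 = rs n + 1 := fun n =>
    (tangentBalls_iff_dist_eq_add (hrs₀ n) one_pos).1 (hCi n ▸ hρi n ▸ htan n)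
  have hdist_lim : dist c 0 = r + 1 :=
    tendsto_nhds_unique (hc.dist tendsto_const_nhds) (by simpa only [hdist] using hr.add_const 1)
  refine ⟨hrM, (tangentBalls_iff_dist_eq_add hr₀ one_pos).2 hdist_lim, fun x hx => ?_⟩
  obtain ⟨xs, hxs, hlim⟩ := exists_tendsto_of_mem_sphere hc hr (fun n => (hrs₀ n).le) hr₀ hx
  exact hupper x xs (fun n => hS n ▸ mem_iUnion.2 ⟨i n, hCi n ▸ hρi n ▸ hxs n⟩) hlim

/-- limits of sphere packings containing the unit ball, whose balls
tangent to the unit ball have radii in [1/M, M]: the limit set contains the unit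
sphere, and any limit of spheres tangent to the unit ball has radius in [1/M, M]
and is tangent to the unit sphere. -/
theorem packing_limit (d : ℕ) (hd : 2 ≤ d) (M : ℝ) (hM : 1 ≤ M)
    (ι : ℕ → Type) (C : ∀ n, ι n → EuclideanSpace ℝ (Fin d)) (ρ : ∀ n, ι n → ℝ)
    (hρ : ∀ n i, 0 < ρ n i)
    (hdisj : ∀ n, Pairwise fun i j : ι n =>
      Disjoint (ball (C n i) (ρ n i)) (ball (C n j) (ρ n j)))
    (hunit : ∀ n, ∃ i : ι n, C n i = 0 ∧ ρ n i = 1)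
    (hrad : ∀ n (i : ι n), TangentBalls (C n i) (ρ n i) (0 : EuclideanSpace ℝ (Fin d)) 1 →
      ρ n i ∈ Set.Icc (1 / M) M)
    (S : ℕ → Set (EuclideanSpace ℝ (Fin d)))
    (hS : ∀ n, S n = ⋃ i : ι n, sphere (C n i) (ρ n i))
    (P : Set (EuclideanSpace ℝ (Fin d))) (hP : IsClosed P)
    -- local Hausdorff convergence of the packings (expressed in Kuratowski form):
    (hupper : ∀ (x : EuclideanSpace ℝ (Fin d)) (xs : ℕ → EuclideanSpace ℝ (Fin d)),
      (∀ n, xs n ∈ S n) → Tendsto xs atTop (nhds x) → x ∈ P)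
    (hlower : ∀ x ∈ P, ∃ xs : ℕ → EuclideanSpace ℝ (Fin d),
      (∀ n, xs n ∈ S n) ∧ Tendsto xs atTop (nhds x)) :
    sphere (0 : EuclideanSpace ℝ (Fin d)) 1 ⊆ P ∧
      ∀ (c : EuclideanSpace ℝ (Fin d)) (r : ℝ)
        (cs : ℕ → EuclideanSpace ℝ (Fin d)) (rs : ℕ → ℝ),
        (∀ n, ∃ i : ι n, C n i = cs n ∧ ρ n i = rs n ∧
          TangentBalls (C n i) (ρ n i) (0 : EuclideanSpace ℝ (Fin d)) 1) →
        Tendsto cs atTop (nhds c) → Tendsto rs atTop (nhds r) →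
        r ∈ Set.Icc (1 / M) M ∧
          TangentBalls c r (0 : EuclideanSpace ℝ (Fin d)) 1 ∧
          sphere c r ⊆ P :=
  packing_limit_general d hd M ι C ρ hρ hunit hrad S hS P hupper
end
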